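/- arXiv:1708.04484 — 2 statements merged into one kernel-verified Lean document; each statement's English description precedes it below -/
import Mathlib

section
/- Fix an integer b with 12 ≤ b ≤ 35. There is a constant C = C(b) such that for every prime p and every integer N, |𝔏(p,N) − p⁶| ≤ C·p⁵ and |𝔎(p,N) − p⁵| ≤ C·p⁴. -/
open scoped Classical
open Finset

noncomputable section


/-- `𝔎(p,N)`: the number of tuples `(u₁,…,u₆)` with `1 ≤ uⱼ ≤ p`, `p ∤ uⱼ`, and
`u₁³ + u₂³ + u₃³ + u₄³ + u₅⁴ + u₆^b ≡ N (mod p)`. -/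
def K6 (b p : ℕ) (N : ℤ) : ℕ :=
  ((Finset.Icc 1 p ×ˢ Finset.Icc 1 p ×ˢ Finset.Icc 1 p ×ˢ Finset.Icc 1 p ×ˢ
      Finset.Icc 1 p ×ˢ Finset.Icc 1 p).filter
    (fun u : ℕ × ℕ × ℕ × ℕ × ℕ × ℕ =>
      ¬ p ∣ u.1 ∧ ¬ p ∣ u.2.1 ∧ ¬ p ∣ u.2.2.1 ∧ ¬ p ∣ u.2.2.2.1 ∧
      ¬ p ∣ u.2.2.2.2.1 ∧ ¬ p ∣ u.2.2.2.2.2 ∧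
      (u.1 : ℤ) ^ 3 + (u.2.1 : ℤ) ^ 3 + (u.2.2.1 : ℤ) ^ 3 + (u.2.2.2.1 : ℤ) ^ 3 +
        (u.2.2.2.2.1 : ℤ) ^ 4 + (u.2.2.2.2.2 : ℤ) ^ b ≡ N [ZMOD (p : ℤ)])).card

/-- `𝔏(p,N)`: the number of tuples `(x,u₁,…,u₆)` with `1 ≤ x ≤ p`, `1 ≤ uⱼ ≤ p`, `p ∤ uⱼ`,
and `x² + u₁³ + u₂³ + u₃³ + u₄³ + u₅⁴ + u₆^b ≡ N (mod p)`. -/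
def L7 (b p : ℕ) (N : ℤ) : ℕ :=
  ((Finset.Icc 1 p ×ˢ Finset.Icc 1 p ×ˢ Finset.Icc 1 p ×ˢ Finset.Icc 1 p ×ˢ
      Finset.Icc 1 p ×ˢ Finset.Icc 1 p ×ˢ Finset.Icc 1 p).filter
    (fun u : ℕ × ℕ × ℕ × ℕ × ℕ × ℕ × ℕ =>
      ¬ p ∣ u.2.1 ∧ ¬ p ∣ u.2.2.1 ∧ ¬ p ∣ u.2.2.2.1 ∧ ¬ p ∣ u.2.2.2.2.1 ∧
      ¬ p ∣ u.2.2.2.2.2.1 ∧ ¬ p ∣ u.2.2.2.2.2.2 ∧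
      (u.1 : ℤ) ^ 2 + (u.2.1 : ℤ) ^ 3 + (u.2.2.1 : ℤ) ^ 3 + (u.2.2.2.1 : ℤ) ^ 3 +
        (u.2.2.2.2.1 : ℤ) ^ 3 + (u.2.2.2.2.2.1 : ℤ) ^ 4 + (u.2.2.2.2.2.2 : ℤ) ^ b
        ≡ N [ZMOD (p : ℤ)])).card

/-- `𝔏*(p,N)`: the number of tuples `(x,u₁,…,u₆)` with `1 ≤ x ≤ p`, `1 ≤ uⱼ ≤ p`, `p ∤ x`,
`p ∤ uⱼ`, and `x² + u₁³ + u₂³ + u₃³ + u₄³ + u₅⁴ + u₆^b ≡ N (mod p)`. -/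
def Lstar (b p : ℕ) (N : ℤ) : ℕ :=
  ((Finset.Icc 1 p ×ˢ Finset.Icc 1 p ×ˢ Finset.Icc 1 p ×ˢ Finset.Icc 1 p ×ˢ
      Finset.Icc 1 p ×ˢ Finset.Icc 1 p ×ˢ Finset.Icc 1 p).filter
    (fun u : ℕ × ℕ × ℕ × ℕ × ℕ × ℕ × ℕ =>
      ¬ p ∣ u.1 ∧ ¬ p ∣ u.2.1 ∧ ¬ p ∣ u.2.2.1 ∧ ¬ p ∣ u.2.2.2.1 ∧ ¬ p ∣ u.2.2.2.2.1 ∧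
      ¬ p ∣ u.2.2.2.2.2.1 ∧ ¬ p ∣ u.2.2.2.2.2.2 ∧
      (u.1 : ℤ) ^ 2 + (u.2.1 : ℤ) ^ 3 + (u.2.2.1 : ℤ) ^ 3 + (u.2.2.2.1 : ℤ) ^ 3 +
        (u.2.2.2.2.1 : ℤ) ^ 3 + (u.2.2.2.2.2.1 : ℤ) ^ 4 + (u.2.2.2.2.2.2 : ℤ) ^ b
        ≡ N [ZMOD (p : ℤ)])).card

/-! Detect solutions with additive characters: for a finite field with `q` elements and a primitive
character `ψ`, `q · #{u ∈ (𝔽^×)⁶ : u₁³ + u₂³ + u₃³ + u₄³ + u₅⁴ + u₆^b = M}` equals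
`∑ₜ S₃(t)⁴ S₄(t) S_b(t) ψ(-tM)`, where `S_k(t) = ∑_{u ≠ 0} ψ(t uᵏ)`. The term `t = 0` is `(q - 1)⁶`.
All the cancellation needed comes from the four cubic sums: Parseval and the fact that `x ↦ x³` is
at most `3`-to-`1` give `∑ₜ |S₃(t)|² ≤ 3q(q - 1)`, and since `S₃(t c³) = S₃(t)` for `c ≠ 0`,
averaging over `c` gives `|S₃(t)|² ≤ 9q` for `t ≠ 0`. Bounding `S₄` and `S_b` trivially by `q`,
the terms `t ≠ 0` contribute at most `27 q⁵`. The count with the extra square is a sum of `q` such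
counts.
-/

lemma AddChar.map_sum_eq_prod {ι A M : Type*} [AddCommMonoid A] [CommMonoid M] (ψ : AddChar A M)
    (s : Finset ι) (f : ι → A) : ψ (∑ i ∈ s, f i) = ∏ i ∈ s, ψ (f i) := by
  classical
  induction s using Finset.induction_on with
  | empty => simp
  | insert a s ha ih => rw [sum_insert ha, prod_insert ha, ψ.map_add_eq_mul, ih]

lemma card_filter_pow_eq_le {R : Type*} [CommRing R] [IsDomain R] [DecidableEq R] (A : Finset R)
    {k : ℕ} (hk : k ≠ 0) (s : R) : #{x ∈ A | x ^ k = s} ≤ k := by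
  calc #{x ∈ A | x ^ k = s} ≤ #(Polynomial.nthRoots k s).toFinset :=
        card_le_card fun x hx ↦ by
          simpa [Polynomial.mem_nthRoots (Nat.pos_of_ne_zero hk)] using (mem_filter.1 hx).2
    _ ≤ k := (Multiset.toFinset_card_le _).trans (Polynomial.card_nthRoots k s)

section CharacterSums

variable {F : Type*} [Field F] [Fintype F] [DecidableEq F] (ψ : AddChar F ℂ)

def expSum {α : Type*} (A : Finset α) (f : α → F) (t : F) : ℂ := ∑ x ∈ A, ψ (t * f x)

variable {ψ}

theorem card_mul_card_filter_eq {α : Type*} (hψ : ψ.IsPrimitive) (A : Finset α) (f : α → F)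
    (M : F) :
    (Fintype.card F : ℂ) * #{x ∈ A | f x = M} = ∑ t, expSum ψ A f t * ψ (-(t * M)) := by
  have orth (x : α) : ∑ t, ψ (t * (f x - M)) = if f x = M then (Fintype.card F : ℂ) else 0 := by
    simp [AddChar.sum_mulShift _ hψ, sub_eq_zero]
  calc (Fintype.card F : ℂ) * #{x ∈ A | f x = M} = ∑ x ∈ A, ∑ t, ψ (t * (f x - M)) := by
        simp only [orth, sum_ite, sum_const_zero, add_zero, sum_const, nsmul_eq_mul, mul_comm]
    _ = _ := by
        rw [sum_comm]
        simp only [expSum, sum_mul, sub_eq_add_neg, mul_add, mul_neg, AddChar.map_add_eq_mul]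

theorem sum_norm_sq_expSum {α : Type*} (hψ : ψ.IsPrimitive) (A : Finset α) (f : α → F) :
    ∑ t, ‖expSum ψ A f t‖ ^ 2 = Fintype.card F * #{y ∈ A ×ˢ A | f y.1 = f y.2} := by
  have hconj (t : F) : expSum ψ A f t * starRingEnd ℂ (expSum ψ A f t)
      = expSum ψ (A ×ˢ A) (fun y ↦ f y.1 - f y.2) t := by
    simp only [expSum, map_sum, sum_mul_sum, sum_product, ← AddChar.map_neg_eq_conj,
      ← AddChar.map_add_eq_mul, sub_eq_add_neg, mul_add, mul_neg]
  have h := card_mul_card_filter_eq hψ (A ×ˢ A) (fun y ↦ f y.1 - f y.2) 0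
  simp only [sub_eq_zero, mul_zero, neg_zero, AddChar.map_zero_eq_one, mul_one, ← hconj,
    Complex.mul_conj'] at h
  exact_mod_cast h.symm

variable (ψ) in
def monomialSum (k : ℕ) (t : F) : ℂ := expSum ψ {0}ᶜ (· ^ k) t

lemma monomialSum_zero (k : ℕ) : monomialSum ψ k 0 = Fintype.card F - 1 := by
  simp [monomialSum, expSum, card_compl, Nat.cast_sub Fintype.card_pos]

lemma norm_monomialSum_le (k : ℕ) (t : F) : ‖monomialSum ψ k t‖ ≤ Fintype.card F :=
  (norm_sum_le _ _).trans <| by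
    simpa [ψ.norm_apply] using (card_le_univ ({0}ᶜ : Finset F))

lemma monomialSum_mul_pow (k : ℕ) (t : F) {c : F} (hc : c ≠ 0) :
    monomialSum ψ k (t * c ^ k) = monomialSum ψ k t :=
  sum_equiv (Equiv.mulLeft₀ c hc) (by simp [hc]) fun u _ ↦ by simp [mul_pow, mul_assoc]

lemma sum_norm_sq_monomialSum_le (hψ : ψ.IsPrimitive) {k : ℕ} (hk : k ≠ 0) :
    ∑ t, ‖monomialSum ψ k t‖ ^ 2 ≤ k * Fintype.card F * (Fintype.card F - 1) := by
  have hpairs : #{y ∈ ({0}ᶜ : Finset F) ×ˢ {0}ᶜ | y.1 ^ k = y.2 ^ k}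
      ≤ k * (Fintype.card F - 1) := by
    calc #{y ∈ ({0}ᶜ : Finset F) ×ˢ {0}ᶜ | y.1 ^ k = y.2 ^ k}
        = ∑ x ∈ ({0}ᶜ : Finset F), #{y ∈ ({0}ᶜ : Finset F) | y ^ k = x ^ k} := by
          simp only [card_filter, sum_product, eq_comm]
      _ ≤ ∑ x ∈ ({0}ᶜ : Finset F), k := sum_le_sum fun x _ ↦ card_filter_pow_eq_le _ hk _
      _ = k * (Fintype.card F - 1) := by simp [card_compl, mul_comm]
  calc ∑ t, ‖monomialSum ψ k t‖ ^ 2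
      = Fintype.card F * #{y ∈ ({0}ᶜ : Finset F) ×ˢ {0}ᶜ | y.1 ^ k = y.2 ^ k} :=
        sum_norm_sq_expSum hψ _ _
    _ ≤ Fintype.card F * (k * (Fintype.card F - 1 : ℕ) : ℕ) := by gcongr
    _ = k * Fintype.card F * (Fintype.card F - 1) := by
          rw [Nat.cast_mul, Nat.cast_pred Fintype.card_pos]
          ring

lemma norm_sq_monomialSum_le (hψ : ψ.IsPrimitive) {k : ℕ} (hk : k ≠ 0) {t : F} (ht : t ≠ 0) :
    ‖monomialSum ψ k t‖ ^ 2 ≤ k ^ 2 * Fintype.card F := by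
  have hq : (1 : ℝ) < Fintype.card F := by exact_mod_cast Fintype.one_lt_card
  have hfiber (s : F) : #{c ∈ ({0}ᶜ : Finset F) | t * c ^ k = s} ≤ k := by
    simpa only [← eq_inv_mul_iff_mul_eq₀ ht] using card_filter_pow_eq_le _ hk (t⁻¹ * s)
  have hscale : (Fintype.card F - 1) * ‖monomialSum ψ k t‖ ^ 2
      ≤ k * (k * Fintype.card F * (Fintype.card F - 1)) := by
    calc (Fintype.card F - 1) * ‖monomialSum ψ k t‖ ^ 2
        = ∑ c ∈ ({0}ᶜ : Finset F), ‖monomialSum ψ k (t * c ^ k)‖ ^ 2 := by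
          rw [sum_congr rfl fun c hc ↦ by
            rw [monomialSum_mul_pow k t (by simpa using hc)]]
          simp [card_compl, Nat.cast_sub Fintype.card_pos]
      _ = ∑ s, ∑ c ∈ ({0}ᶜ : Finset F) with t * c ^ k = s, ‖monomialSum ψ k s‖ ^ 2 := by
          rw [← sum_fiberwise _ (fun c ↦ t * c ^ k)]
          exact sum_congr rfl fun s _ ↦ sum_congr rfl fun c hc ↦ by rw [(mem_filter.1 hc).2]
      _ ≤ ∑ s, k * ‖monomialSum ψ k s‖ ^ 2 := by
          gcongr with s
          rw [sum_const, nsmul_eq_mul]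
          gcongr
          exact_mod_cast hfiber s
      _ ≤ k * (k * Fintype.card F * (Fintype.card F - 1)) := by
          rw [← mul_sum]
          gcongr
          exact sum_norm_sq_monomialSum_le hψ hk
  exact le_of_mul_le_mul_left (hscale.trans_eq (by ring)) (by linarith)

end CharacterSums

section DiagonalEquations

variable {F : Type*} [Field F] [Fintype F] [DecidableEq F] {n : ℕ}

def diagCount (k : Fin n → ℕ) (M : F) : ℕ :=
  #{u ∈ Fintype.piFinset fun _ ↦ ({0}ᶜ : Finset F) | ∑ i, u i ^ k i = M}

lemma expSum_diagonal (ψ : AddChar F ℂ) (k : Fin n → ℕ) (t : F) :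
    expSum ψ (Fintype.piFinset fun _ ↦ {0}ᶜ) (fun u ↦ ∑ i, u i ^ k i) t
      = ∏ i, monomialSum ψ (k i) t := by
  simp only [expSum, monomialSum, mul_sum, AddChar.map_sum_eq_prod, prod_univ_sum]

lemma abs_card_mul_diagCount_sub_le {ψ : AddChar F ℂ} (hψ : ψ.IsPrimitive) (k : Fin n → ℕ)
    (M : F) :
    |Fintype.card F * (diagCount k M : ℝ) - (Fintype.card F - 1) ^ n|
      ≤ ∑ t ∈ univ.erase 0, ∏ i, ‖monomialSum ψ (k i) t‖ := by
  have herror : ((Fintype.card F * (diagCount k M : ℝ) - (Fintype.card F - 1) ^ n : ℝ) : ℂ)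
      = ∑ t ∈ univ.erase 0, (∏ i, monomialSum ψ (k i) t) * ψ (-(t * M)) := by
    push_cast
    rw [diagCount, card_mul_card_filter_eq hψ, ← add_sum_erase _ _ (mem_univ 0)]
    simp [expSum_diagonal, monomialSum_zero]
  rw [← Real.norm_eq_abs, ← Complex.norm_real, herror]
  refine (norm_sum_le _ _).trans_eq (sum_congr rfl fun t _ ↦ ?_)
  simp [norm_prod, ψ.norm_apply]

lemma sum_prod_norm_monomialSum_le {ψ : AddChar F ℂ} (hψ : ψ.IsPrimitive) {d : ℕ} (hd : d ≠ 0)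
    (e b : ℕ) :
    ∑ t ∈ univ.erase 0, ∏ i, ‖monomialSum ψ (![d, d, d, d, e, b] i) t‖
      ≤ d ^ 3 * (Fintype.card F : ℝ) ^ 5 := by
  set q : ℝ := (Fintype.card F : ℝ)
  have hterm (t : F) (ht : t ≠ 0) : ∏ i, ‖monomialSum ψ (![d, d, d, d, e, b] i) t‖
      ≤ d ^ 2 * q ^ 3 * ‖monomialSum ψ d t‖ ^ 2 := by
    have h2 := norm_sq_monomialSum_le hψ hd ht
    have he := norm_monomialSum_le (ψ := ψ) e t
    have hb := norm_monomialSum_le (ψ := ψ) b t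
    calc ∏ i, ‖monomialSum ψ (![d, d, d, d, e, b] i) t‖
        = ‖monomialSum ψ d t‖ ^ 2 *
            (‖monomialSum ψ d t‖ ^ 2 * (‖monomialSum ψ e t‖ * ‖monomialSum ψ b t‖)) := by
          simp only [Fin.prod_univ_six, Matrix.cons_val]
          ring
      _ ≤ ‖monomialSum ψ d t‖ ^ 2 * (d ^ 2 * q * (q * q)) := by gcongr
      _ = d ^ 2 * q ^ 3 * ‖monomialSum ψ d t‖ ^ 2 := by ring
  calc ∑ t ∈ univ.erase 0, ∏ i, ‖monomialSum ψ (![d, d, d, d, e, b] i) t‖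
      ≤ ∑ t, d ^ 2 * q ^ 3 * ‖monomialSum ψ d t‖ ^ 2 := by
        refine (sum_le_sum fun t ht ↦ hterm t (ne_of_mem_erase ht)).trans ?_
        exact sum_le_sum_of_subset_of_nonneg (subset_univ _) fun _ _ _ ↦ by positivity
    _ ≤ d ^ 2 * q ^ 3 * (d * q * (q - 1)) := by
        rw [← mul_sum]
        gcongr
        exact sum_norm_sq_monomialSum_le hψ hd
    _ ≤ d ^ 3 * q ^ 5 := by
        have : 0 ≤ (d : ℝ) ^ 3 * q ^ 4 := by positivity
        have hexpand : (d : ℝ) ^ 2 * q ^ 3 * (d * q * (q - 1)) = d ^ 3 * q ^ 5 - d ^ 3 * q ^ 4 := by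
          ring
        linarith

lemma abs_sub_one_pow_sub_pow_le {x : ℝ} (hx : 1 ≤ x) (n : ℕ) :
    |(x - 1) ^ n - x ^ n| ≤ n * x ^ (n - 1) := by
  have h := abs_pow_sub_pow_le (x - 1) x n
  rwa [max_eq_right (abs_le_abs (by linarith) (by linarith)), abs_of_nonneg (by linarith : 0 ≤ x),
    sub_sub_cancel_left, abs_neg, abs_one, one_mul] at h

theorem abs_diagCount_sub_le {d : ℕ} (hd : d ≠ 0) (e b : ℕ) (M : F) :
    |(diagCount ![d, d, d, d, e, b] M : ℝ) - (Fintype.card F : ℝ) ^ 5|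
      ≤ (d ^ 3 + 6) * (Fintype.card F : ℝ) ^ 4 := by
  set q : ℝ := (Fintype.card F : ℝ)
  have hq : 1 ≤ q := Nat.one_le_cast.mpr Fintype.card_pos
  have hψ := AddChar.FiniteField.primitiveChar_to_Complex_isPrimitive F
  have hmain := (abs_card_mul_diagCount_sub_le hψ ![d, d, d, d, e, b] M).trans
    (sum_prod_norm_monomialSum_le hψ hd e b)
  have hscaled : |q * ((diagCount ![d, d, d, d, e, b] M : ℝ) - q ^ 5)|
      ≤ q * ((d ^ 3 + 6) * q ^ 4) := by
    calc |q * ((diagCount ![d, d, d, d, e, b] M : ℝ) - q ^ 5)|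
        = |(q * diagCount ![d, d, d, d, e, b] M - (q - 1) ^ 6) + ((q - 1) ^ 6 - q ^ 6)| := by
          ring_nf
      _ ≤ |q * diagCount ![d, d, d, d, e, b] M - (q - 1) ^ 6| + |(q - 1) ^ 6 - q ^ 6| :=
          abs_add_le _ _
      _ ≤ d ^ 3 * q ^ 5 + 6 * q ^ 5 :=
          add_le_add hmain (by simpa using abs_sub_one_pow_sub_pow_le hq 6)
      _ = q * ((d ^ 3 + 6) * q ^ 4) := by ring
  rw [abs_mul, abs_of_pos (by linarith)] at hscaled
  exact le_of_mul_le_mul_left hscaled (by linarith)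

lemma card_filter_add_diagonal_eq (g : F → F) (k : Fin n → ℕ) (M : F) :
    #{w ∈ (univ : Finset F) ×ˢ Fintype.piFinset (fun _ ↦ ({0}ᶜ : Finset F)) |
      g w.1 + ∑ i, w.2 i ^ k i = M} = ∑ x, diagCount k (M - g x) := by
  simp only [card_filter, sum_product, diagCount, eq_sub_iff_add_eq']

theorem abs_card_filter_add_diagonal_sub_le {d : ℕ} (hd : d ≠ 0) (g : F → F) (e b : ℕ) (M : F) :
    |(#{w ∈ (univ : Finset F) ×ˢ Fintype.piFinset (fun _ ↦ ({0}ᶜ : Finset F)) |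
      g w.1 + ∑ i, w.2 i ^ ![d, d, d, d, e, b] i = M} : ℝ) - (Fintype.card F : ℝ) ^ 6|
      ≤ (d ^ 3 + 6) * (Fintype.card F : ℝ) ^ 5 := by
  rw [card_filter_add_diagonal_eq]
  calc |((∑ x, diagCount ![d, d, d, d, e, b] (M - g x) : ℕ) : ℝ) - (Fintype.card F : ℝ) ^ 6|
      = |∑ x : F, ((diagCount ![d, d, d, d, e, b] (M - g x) : ℝ) - (Fintype.card F : ℝ) ^ 5)| := by
        simp [sum_sub_distrib, pow_succ']
    _ ≤ ∑ x : F, |(diagCount ![d, d, d, d, e, b] (M - g x) : ℝ) - (Fintype.card F : ℝ) ^ 5| :=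
        abs_sum_le_sum_abs _ _
    _ ≤ ∑ _x : F, (d ^ 3 + 6) * (Fintype.card F : ℝ) ^ 4 :=
        sum_le_sum fun x _ ↦ abs_diagCount_sub_le hd e b _
    _ = (d ^ 3 + 6) * (Fintype.card F : ℝ) ^ 5 := by simp [pow_succ']; ring

end DiagonalEquations

section Reduction

variable {p : ℕ}

lemma natCast_bijOn_Icc [NeZero p] :
    Set.BijOn (Nat.cast : ℕ → ZMod p) (Icc 1 p : Finset ℕ) Set.univ := by
  refine ⟨fun _ _ ↦ Set.mem_univ _, fun a ha b hb hab ↦ ?_, fun v _ ↦ ?_⟩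
  · simp only [coe_Icc, Set.mem_Icc] at ha hb
    refine ((ZMod.natCast_eq_natCast_iff a b p).1 hab).eq_of_abs_lt ?_
    rw [abs_sub_lt_iff]
    omega
  · refine ⟨(v - 1).val + 1, ?_, by simp⟩
    have := (v - 1).val_lt
    simp only [coe_Icc, Set.mem_Icc]
    omega

def castVec (p : ℕ) (u : ℕ × ℕ × ℕ × ℕ × ℕ × ℕ) : Fin 6 → ZMod p :=
  ![u.1, u.2.1, u.2.2.1, u.2.2.2.1, u.2.2.2.2.1, u.2.2.2.2.2]

lemma castVec_bijOn [NeZero p] :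
    Set.BijOn (castVec p)
      (Icc 1 p ×ˢ Icc 1 p ×ˢ Icc 1 p ×ˢ Icc 1 p ×ˢ Icc 1 p ×ˢ Icc 1 p : Finset _) Set.univ := by
  obtain ⟨-, hinj, hsurj⟩ := natCast_bijOn_Icc (p := p)
  refine ⟨fun _ _ ↦ Set.mem_univ _, fun u hu v hv huv ↦ ?_, fun w _ ↦ ?_⟩
  · obtain ⟨u₁, u₂, u₃, u₄, u₅, u₆⟩ := u
    obtain ⟨v₁, v₂, v₃, v₄, v₅, v₆⟩ := v
    simp only [coe_product, Set.mem_prod] at hu hv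
    simp only [castVec, funext_iff, Fin.forall_fin_succ] at huv
    simp only [Prod.mk.injEq]
    exact ⟨hinj hu.1 hv.1 huv.1, hinj hu.2.1 hv.2.1 huv.2.1, hinj hu.2.2.1 hv.2.2.1 huv.2.2.1,
      hinj hu.2.2.2.1 hv.2.2.2.1 huv.2.2.2.1, hinj hu.2.2.2.2.1 hv.2.2.2.2.1 huv.2.2.2.2.1,
      hinj hu.2.2.2.2.2 hv.2.2.2.2.2 huv.2.2.2.2.2.1⟩
  · choose lift hlift_mem hlift using fun x : ZMod p ↦ hsurj (Set.mem_univ x)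
    refine ⟨(lift (w 0), lift (w 1), lift (w 2), lift (w 3), lift (w 4), lift (w 5)),
      by simp only [coe_product, Set.mem_prod, hlift_mem, and_self], funext fun i ↦ ?_⟩
    fin_cases i <;> simp [castVec, hlift]

lemma card_filter_comp_eq_of_bijOn {α β : Type*} [DecidableEq β] {s : Finset α} {φ : α → β}
    (h : Set.BijOn φ s Set.univ) (t : Finset β) (P : β → Prop) [DecidablePred P] :
    #{x ∈ s | φ x ∈ t ∧ P (φ x)} = #{y ∈ t | P y} := by
  refine card_nbij φ (fun x hx ↦ by simpa using (mem_filter.1 hx).2)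
    (h.injOn.mono fun x hx ↦ (mem_filter.1 hx).1) fun y hy ↦ ?_
  obtain ⟨x, hx, rfl⟩ := h.surjOn (Set.mem_univ y)
  exact ⟨x, by simp_all, rfl⟩

lemma K6_eq_diagCount [Fact p.Prime] (b : ℕ) (N : ℤ) :
    K6 b p N = diagCount ![3, 3, 3, 3, 4, b] (N : ZMod p) := by
  rw [diagCount, ← card_filter_comp_eq_of_bijOn castVec_bijOn, K6]
  congr 1
  refine filter_congr fun u _ ↦ ?_
  simp [castVec, Fin.sum_univ_six, Fin.forall_fin_succ, ZMod.natCast_eq_zero_iff,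
    ← ZMod.intCast_eq_intCast_iff, and_assoc]

lemma L7_eq_card_filter [Fact p.Prime] (b : ℕ) (N : ℤ) :
    L7 b p N = #{w ∈ (univ : Finset (ZMod p)) ×ˢ
        Fintype.piFinset (fun _ ↦ ({0}ᶜ : Finset (ZMod p))) |
      w.1 ^ 2 + ∑ i, w.2 i ^ ![3, 3, 3, 3, 4, b] i = (N : ZMod p)} := by
  have hbij : Set.BijOn (fun u : ℕ × ℕ × ℕ × ℕ × ℕ × ℕ × ℕ ↦ ((u.1 : ZMod p), castVec p u.2))
      (Icc 1 p ×ˢ (Icc 1 p ×ˢ Icc 1 p ×ˢ Icc 1 p ×ˢ Icc 1 p ×ˢ Icc 1 p ×ˢ Icc 1 p) : Finset _)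
      Set.univ := by
    simpa [coe_product, Set.univ_prod_univ] using natCast_bijOn_Icc.prodMap castVec_bijOn
  rw [← card_filter_comp_eq_of_bijOn hbij, L7]
  congr 1
  refine filter_congr fun u _ ↦ ?_
  simp [castVec, Fin.sum_univ_six, Fin.forall_fin_succ, ZMod.natCast_eq_zero_iff,
    ← ZMod.intCast_eq_intCast_iff, and_assoc, add_assoc]

end Reduction

theorem stmt10_general (b : ℕ) :
    ∃ C : ℝ, 0 < C ∧ ∀ p : ℕ, p.Prime → ∀ N : ℤ,
      |(L7 b p N : ℝ) - (p : ℝ) ^ 6| ≤ C * (p : ℝ) ^ 5 ∧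
      |(K6 b p N : ℝ) - (p : ℝ) ^ 5| ≤ C * (p : ℝ) ^ 4 := by
  refine ⟨33, by norm_num, fun p hp N ↦ ?_⟩
  have := Fact.mk hp
  have hL := abs_card_filter_add_diagonal_sub_le (F := ZMod p) three_ne_zero (· ^ 2) 4 b N
  have hK := abs_diagCount_sub_le (F := ZMod p) three_ne_zero 4 b N
  rw [ZMod.card] at hL hK
  rw [L7_eq_card_filter, K6_eq_diagCount]
  norm_num at hL hK
  exact ⟨hL, hK⟩

theorem stmt10 (b : ℕ) (hb1 : 12 ≤ b) (hb2 : b ≤ 35) :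
    ∃ C : ℝ, 0 < C ∧ ∀ p : ℕ, p.Prime → ∀ N : ℤ,
      |(L7 b p N : ℝ) - (p : ℝ) ^ 6| ≤ C * (p : ℝ) ^ 5 ∧
      |(K6 b p N : ℝ) - (p : ℝ) ^ 5| ≤ C * (p : ℝ) ^ 4 :=
  stmt10_general b
end
end

section
/- Fix an integer b with 12 ≤ b ≤ 35. For every prime p and every odd positive integer N, one has 𝔏*(p,N) > 0; that is, the congruence x² + u₁³ + u₂³ + u₃³ + u₄³ + u₅⁴ + u₆^b ≡ N (mod p) has a solution with all of x, u₁,…,u₆ coprime to p. -/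
open scoped Classical
open Finset

noncomputable section

/-!
For `p = 2, 3, 7` a solution with all variables nonzero is found by inspection (for `p = 2`
the all-ones tuple gives `7 ≡ 1 ≡ N`, which is where the parity of `N` enters). For every other
prime, set `x = u₅ = u₆ = 1`: it remains to write any residue as a sum of four nonzero cubes.
The nonzero cubes form a set `C` with `3 * #C ≥ p - 1`, since cubing is at most three-to-one,
and two applications of Cauchy–Davenport give `#((C + C) + (C + C)) ≥ min p (4 * #C - 3)`,
which is `p` as soon as `p ≥ 5` and `p ≠ 7`.
-/

open scoped Pointwise
open Polynomial

def nonzeroPowers (R : Type*) [CommRing R] [Fintype R] (n : ℕ) : Finset R :=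
  (univ.erase 0).image (· ^ n)

lemma card_sub_one_le_mul_card_nonzeroPowers {R : Type*} [CommRing R] [IsDomain R] [Fintype R]
    {n : ℕ} (hn : 0 < n) : Fintype.card R - 1 ≤ n * #(nonzeroPowers R n) := by
  rw [← card_univ, ← card_erase_of_mem (mem_univ 0)]
  refine card_le_mul_card_image _ n fun c _ => ?_
  calc #{x ∈ univ.erase 0 | x ^ n = c} ≤ #(nthRoots n c).toFinset :=
        card_le_card fun x hx => by simpa [mem_nthRoots hn] using (mem_filter.mp hx).2
    _ ≤ n := (Multiset.toFinset_card_le _).trans (card_nthRoots n c)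

lemma ZMod.add_add_self_eq_univ {p : ℕ} [Fact p.Prime] {A : Finset (ZMod p)}
    (hA : A.Nonempty) (hcard : p + 3 ≤ 4 * #A) : A + A + (A + A) = univ := by
  have h2 : min p (#A + #A - 1) ≤ #(A + A) := ZMod.cauchy_davenport Fact.out hA hA
  have h4 : min p (#(A + A) + #(A + A) - 1) ≤ #(A + A + (A + A)) :=
    ZMod.cauchy_davenport Fact.out (hA.add hA) (hA.add hA)
  have hle := card_le_univ (A + A + (A + A))
  rw [ZMod.card] at hle
  exact eq_univ_of_card _ (by rw [ZMod.card]; omega)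

lemma ZMod.exists_four_nonzero_cubes {p : ℕ} [Fact p.Prime] (hp5 : 5 ≤ p) (hp7 : p ≠ 7)
    (t : ZMod p) :
    ∃ a b c d : ZMod p, a ≠ 0 ∧ b ≠ 0 ∧ c ≠ 0 ∧ d ≠ 0 ∧ a ^ 3 + b ^ 3 + c ^ 3 + d ^ 3 = t := by
  have hC := card_sub_one_le_mul_card_nonzeroPowers (R := ZMod p) three_pos
  set C := nonzeroPowers (ZMod p) 3
  -- without it, `omega` below would have to cope with `p = 6` and `p = 10`
  have hodd : p % 2 = 1 := Nat.odd_iff.mp ((Fact.out : p.Prime).odd_of_ne_two (by omega))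
  rw [ZMod.card] at hC
  have hCne : C.Nonempty := ⟨1, by simpa [C, nonzeroPowers] using ⟨1, one_ne_zero, one_pow 3⟩⟩
  have ht : t ∈ C + C + (C + C) := by
    rw [ZMod.add_add_self_eq_univ hCne (by omega)]
    exact mem_univ t
  simp only [C, nonzeroPowers, mem_add, mem_image, mem_erase] at ht
  obtain ⟨_, ⟨_, ⟨a, ⟨ha, -⟩, rfl⟩, _, ⟨b, ⟨hb, -⟩, rfl⟩, rfl⟩,
    _, ⟨_, ⟨c, ⟨hc, -⟩, rfl⟩, _, ⟨d, ⟨hd, -⟩, rfl⟩, rfl⟩, rfl⟩ := ht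
  exact ⟨a, b, c, d, ha, hb, hc, hd, by ring⟩

def HasNonzeroSolution (b : ℕ) {R : Type*} [CommRing R] (t : R) : Prop :=
  ∃ x u₁ u₂ u₃ u₄ u₅ u₆ : R, x ≠ 0 ∧ u₁ ≠ 0 ∧ u₂ ≠ 0 ∧ u₃ ≠ 0 ∧ u₄ ≠ 0 ∧ u₅ ≠ 0 ∧ u₆ ≠ 0 ∧
    x ^ 2 + u₁ ^ 3 + u₂ ^ 3 + u₃ ^ 3 + u₄ ^ 3 + u₅ ^ 4 + u₆ ^ b = t

lemma hasNonzeroSolution_zmod_two (b : ℕ) : HasNonzeroSolution b (1 : ZMod 2) :=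
  ⟨1, 1, 1, 1, 1, 1, 1, by decide, by decide, by decide, by decide, by decide, by decide,
    by decide, by simp only [one_pow]; decide⟩

lemma hasNonzeroSolution_zmod_three (b : ℕ) (t : ZMod 3) : HasNonzeroSolution b t := by
  obtain ⟨u, v, hu, hv, h⟩ : ∃ u v : ZMod 3, u ≠ 0 ∧ v ≠ 0 ∧
      1 + 1 + 1 + u ^ 3 + v ^ 3 + 1 + 1 = t := by
    revert t; decide
  exact ⟨1, 1, 1, u, v, 1, 1, by decide, by decide, by decide, hu, hv, by decide,
    by decide, by simpa only [one_pow] using h⟩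

lemma hasNonzeroSolution_zmod_seven (b : ℕ) (t : ZMod 7) : HasNonzeroSolution b t := by
  obtain ⟨x, u, v, hx, hu, hv, h⟩ : ∃ x u v : ZMod 7, x ≠ 0 ∧ u ≠ 0 ∧ v ≠ 0 ∧
      x ^ 2 + 1 + 1 + 1 + u ^ 3 + v ^ 4 + 1 = t := by
    revert t; decide
  exact ⟨x, 1, 1, 1, u, v, 1, hx, by decide, by decide, by decide, hu, hv,
    by decide, by simpa only [one_pow] using h⟩

lemma ZMod.hasNonzeroSolution {p : ℕ} [Fact p.Prime] (hp5 : 5 ≤ p) (hp7 : p ≠ 7) (b : ℕ)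
    (t : ZMod p) : HasNonzeroSolution b t := by
  obtain ⟨a₁, a₂, a₃, a₄, h₁, h₂, h₃, h₄, h⟩ := ZMod.exists_four_nonzero_cubes hp5 hp7 (t - 3)
  exact ⟨1, a₁, a₂, a₃, a₄, 1, 1, one_ne_zero, h₁, h₂, h₃, h₄, one_ne_zero, one_ne_zero,
    by linear_combination h⟩

lemma ZMod.val_mem_Icc_and_not_dvd {p : ℕ} [NeZero p] {z : ZMod p} (hz : z ≠ 0) :
    z.val ∈ Icc 1 p ∧ ¬ p ∣ z.val :=
  ⟨mem_Icc.mpr ⟨ZMod.val_pos.mpr hz, (ZMod.val_lt z).le⟩, by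
    rwa [← ZMod.natCast_eq_zero_iff, ZMod.natCast_zmod_val]⟩

lemma Lstar_pos_of_hasNonzeroSolution {b p : ℕ} [NeZero p] {N : ℤ}
    (h : HasNonzeroSolution b (N : ZMod p)) : 0 < Lstar b p N := by
  obtain ⟨x, u₁, u₂, u₃, u₄, u₅, u₆, hx, h₁, h₂, h₃, h₄, h₅, h₆, hsum⟩ := h
  obtain ⟨hx, hx'⟩ := ZMod.val_mem_Icc_and_not_dvd hx
  obtain ⟨h₁, h₁'⟩ := ZMod.val_mem_Icc_and_not_dvd h₁
  obtain ⟨h₂, h₂'⟩ := ZMod.val_mem_Icc_and_not_dvd h₂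
  obtain ⟨h₃, h₃'⟩ := ZMod.val_mem_Icc_and_not_dvd h₃
  obtain ⟨h₄, h₄'⟩ := ZMod.val_mem_Icc_and_not_dvd h₄
  obtain ⟨h₅, h₅'⟩ := ZMod.val_mem_Icc_and_not_dvd h₅
  obtain ⟨h₆, h₆'⟩ := ZMod.val_mem_Icc_and_not_dvd h₆
  refine card_pos.mpr ⟨(x.val, u₁.val, u₂.val, u₃.val, u₄.val, u₅.val, u₆.val),
    mem_filter.mpr ⟨?_, hx', h₁', h₂', h₃', h₄', h₅', h₆', ?_⟩⟩
  · simp only [mem_product]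
    exact ⟨hx, h₁, h₂, h₃, h₄, h₅, h₆⟩
  · rw [← ZMod.intCast_eq_intCast_iff]
    push_cast
    simpa only [ZMod.natCast_zmod_val] using hsum

theorem stmt11_general (b : ℕ) (p : ℕ) (hp : p.Prime)
    (N : ℤ) (hNodd : Odd N) :
    0 < Lstar b p N := by
  have := Fact.mk hp
  apply Lstar_pos_of_hasNonzeroSolution
  rcases eq_or_ne p 2 with rfl | hp2
  · rw [ZMod.intCast_eq_one_iff_odd.mpr hNodd]
    exact hasNonzeroSolution_zmod_two b
  rcases eq_or_ne p 3 with rfl | hp3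
  · exact hasNonzeroSolution_zmod_three b _
  rcases eq_or_ne p 7 with rfl | hp7
  · exact hasNonzeroSolution_zmod_seven b _
  exact ZMod.hasNonzeroSolution (hp.five_le_of_ne_two_of_ne_three hp2 hp3) hp7 b _

theorem stmt11 (b : ℕ) (hb1 : 12 ≤ b) (hb2 : b ≤ 35) (p : ℕ) (hp : p.Prime)
    (N : ℤ) (hNpos : 0 < N) (hNodd : Odd N) :
    0 < Lstar b p N :=
  stmt11_general b p hp N hNodd
end
end
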